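/- Let φ : X → Y be a measurable mapping between σ-finite measure spaces satisfying the Luzin N⁻¹-property, 1 < p, r < ∞ and 1 ≤ q ≤ s ≤ ∞, and suppose φ induces a composition operator C_φ : L_{r,s}(Y) → L_{p,q}(X). Then C_φ is bounded below, i.e. there is a constant k > 0 with ‖f ∘ φ‖_{p,q} ≥ k‖f‖_{r,s} for every f ∈ L_{r,s}(Y), if and only if there is a constant k > 0 such that ∫_B J_{φ⁻¹}(y) dν(y) ≥ k^p (ν(B))^{p/r} for every measurable set B ∈ 𝓑. -/

import Mathlib

open MeasureTheory Set ENNReal NNReal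

/-- Distribution function `μ{x : |f(x)| > λ}` of a complex-valued function. -/
noncomputable def distribFn {X : Type*} [MeasurableSpace X] (μ : Measure X)
    (f : X → ℂ) (lam : ℝ) : ℝ≥0∞ :=
  μ {x | lam < ‖f x‖}

/-- The Lorentz `(p,q)`-norm, `1 < p < ∞`, `1 ≤ q ≤ ∞`, computed via the
distribution function. -/
noncomputable def lorentzNorm {X : Type*} [MeasurableSpace X] (μ : Measure X)
    (p : ℝ) (q : ℝ≥0∞) (f : X → ℂ) : ℝ≥0∞ :=
  if q = ∞ then ⨆ lam ∈ Set.Ioi (0 : ℝ), ENNReal.ofReal lam * (distribFn μ f lam) ^ (1 / p)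
  else (q * ∫⁻ lam in Set.Ioi (0 : ℝ),
      (ENNReal.ofReal lam * (distribFn μ f lam) ^ (1 / p)) ^ q.toReal /
        ENNReal.ofReal lam) ^ (1 / q.toReal)

/-- Membership in the Lorentz space `L_{p,q}`. -/
def MemLorentz {X : Type*} [MeasurableSpace X] (μ : Measure X)
    (p : ℝ) (q : ℝ≥0∞) (f : X → ℂ) : Prop :=
  Measurable f ∧ lorentzNorm μ p q f < ∞

/-!
Testing the lower bound on an indicator `1_B` with `ν B < ∞`: its `L_{r,s}` norm is `ν(B)^{1/r}`,
and `1_B ∘ φ = 1_{φ⁻¹B}` has `L_{p,q}` norm `μ(φ⁻¹B)^{1/p} = (∫_B J dν)^{1/p}`; σ-finiteness of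
`ν` removes the restriction `ν B < ∞`. Conversely, the set inequality on the level sets
`{|f| > λ}` gives `k μ_f(λ)^{1/r} ≤ μ_{f∘φ}(λ)^{1/p}` for every `λ`, hence
`k ‖f‖_{r,q} ≤ ‖f ∘ φ‖_{p,q}`. Finally `‖f‖_{r,s} ≤ C ‖f‖_{r,q}` for `q ≤ s`: since `μ_f` is
nonincreasing, `g(λ) = λ μ_f(λ)^{1/r}` is bounded by `‖f‖_{r,q}`, and
`∫ g^s dλ/λ ≤ (sup g)^{s-q} ∫ g^q dλ/λ`.
-/

lemma lintegral_Ioc_ofReal_rpow_sub_one {b c : ℝ} (hb : 0 < b) (hc : 0 < c) :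
    ∫⁻ x in Ioc 0 b, ENNReal.ofReal x ^ (c - 1) = ENNReal.ofReal (b ^ c / c) := by
  have hint : IntegrableOn (fun x : ℝ => x ^ (c - 1)) (Ioc 0 b) := by
    rw [← intervalIntegrable_iff_integrableOn_Ioc_of_le hb.le]
    exact intervalIntegral.intervalIntegrable_rpow' (by linarith)
  rw [setLIntegral_congr_fun measurableSet_Ioc fun x hx => ENNReal.ofReal_rpow_of_pos hx.1,
    ← ofReal_integral_eq_lintegral_ofReal hint
      ((ae_restrict_mem measurableSet_Ioc).mono fun x hx => Real.rpow_nonneg hx.1.le _),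
    ← intervalIntegral.integral_of_le hb.le, integral_rpow (Or.inl (by linarith)),
    sub_add_cancel, Real.zero_rpow hc.ne', sub_zero]

lemma mul_rpow_one_div_le_rpow_one_div_iff {p : ℝ} (hp : 0 < p) (r : ℝ) (k a b : ℝ≥0∞) :
    k * a ^ (1 / r) ≤ b ^ (1 / p) ↔ k ^ p * a ^ (p / r) ≤ b := by
  rw [one_div p, ENNReal.le_rpow_inv_iff hp, ENNReal.mul_rpow_of_nonneg _ _ hp.le,
    ← ENNReal.rpow_mul, one_div_mul_eq_div]

lemma mul_rpow_measure_le_of_forall_measure_ne_top {Y : Type*} [MeasurableSpace Y]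
    {ν : Measure Y} [SigmaFinite ν] {F : Set Y → ℝ≥0∞} (hF : Monotone F) (c : ℝ≥0∞) {e : ℝ}
    (he : 0 < e) (h : ∀ B, MeasurableSet B → ν B ≠ ∞ → c * ν B ^ e ≤ F B) {B : Set Y}
    (hB : MeasurableSet B) : c * ν B ^ e ≤ F B := by
  rw [← ν.iSup_restrict_spanningSets B,
    (ENNReal.monotone_rpow_of_nonneg he.le).map_iSup_of_continuousAt
      ENNReal.continuous_rpow_const.continuousAt (ENNReal.zero_rpow_of_pos he),
    ENNReal.mul_iSup]
  refine iSup_le fun n => ?_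
  rw [Measure.restrict_apply hB]
  have hfin : ν (B ∩ spanningSets ν n) ≠ ∞ :=
    ((measure_mono inter_subset_right).trans_lt (measure_spanningSets_lt_top ν n)).ne
  exact (h _ (hB.inter (measurableSet_spanningSets ν n)) hfin).trans (hF inter_subset_left)

/-- `(q ∫_0^∞ g(λ)^q dλ/λ)^{1/q}`, and `sup_{λ>0} g λ` for `q = ∞`: by definition,
`lorentzNorm μ p q f` is this norm of `λ ↦ λ μ_f(λ)^{1/p}`. -/
noncomputable def haarLqNorm (q : ℝ≥0∞) (g : ℝ → ℝ≥0∞) : ℝ≥0∞ :=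
  if q = ∞ then ⨆ lam ∈ Ioi (0 : ℝ), g lam
  else (q * ∫⁻ lam in Ioi (0 : ℝ), g lam ^ q.toReal / ENNReal.ofReal lam) ^ (1 / q.toReal)

namespace haarLqNorm

variable {q s : ℝ≥0∞} {g g' : ℝ → ℝ≥0∞}

lemma of_ne_top (hq : q ≠ ∞) : haarLqNorm q g
    = (q * ∫⁻ lam in Ioi (0 : ℝ), g lam ^ q.toReal / ENNReal.ofReal lam) ^ (1 / q.toReal) :=
  if_neg hq

lemma top : haarLqNorm ∞ g = ⨆ lam ∈ Ioi (0 : ℝ), g lam := if_pos rfl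

lemma apply_le_top {lam : ℝ} (hlam : 0 < lam) : g lam ≤ haarLqNorm ∞ g := by
  rw [top]; exact le_iSup₂_of_le lam hlam le_rfl

lemma mono (h : ∀ lam ∈ Ioi (0 : ℝ), g lam ≤ g' lam) : haarLqNorm q g ≤ haarLqNorm q g' := by
  by_cases hq : q = ∞
  · subst hq; simp only [top]; exact iSup₂_mono h
  · simp only [of_ne_top hq]
    refine ENNReal.rpow_le_rpow (mul_le_mul_right ?_ _) (by positivity)
    refine setLIntegral_mono' measurableSet_Ioi fun lam hlam => ?_
    gcongr
    exact h lam hlam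

lemma congr (h : EqOn g g' (Ioi 0)) : haarLqNorm q g = haarLqNorm q g' :=
  (mono fun _ hlam => (h hlam).le).antisymm (mono fun _ hlam => (h hlam).ge)

lemma const_mul (hq : q ≠ 0) (hg : Measurable g) (c : ℝ≥0∞) :
    haarLqNorm q (fun lam => c * g lam) = c * haarLqNorm q g := by
  by_cases hqt : q = ∞
  · subst hqt; simp only [top, ENNReal.mul_iSup]
  have hq0 : 0 < q.toReal := ENNReal.toReal_pos hq hqt
  simp only [of_ne_top hqt, ENNReal.mul_rpow_of_nonneg _ _ hq0.le, mul_div_assoc]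
  rw [lintegral_const_mul _ (by fun_prop), mul_left_comm,
    ENNReal.mul_rpow_of_nonneg _ _ (by positivity), ← ENNReal.rpow_mul,
    mul_one_div_cancel hq0.ne', ENNReal.rpow_one]

lemma indicator_Iio_one (hq : q ≠ 0) : haarLqNorm q ((Iio 1).indicator ENNReal.ofReal) = 1 := by
  by_cases hqt : q = ∞
  · subst hqt
    rw [top]
    refine le_antisymm (iSup₂_le fun lam _ => ?_) (le_of_forall_lt fun x hx => ?_)
    · by_cases h : lam < 1
      · simp [h, h.le]
      · simp [h]
    · obtain ⟨y, hxy, hy1⟩ := exists_between hx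
      have hy0 : 0 < y.toReal := ENNReal.toReal_pos (pos_of_gt hxy).ne' hy1.ne_top
      have hy1' : y.toReal < 1 := ENNReal.toReal_lt_of_lt_ofReal (by simpa using hy1)
      refine hxy.trans_le (le_iSup₂_of_le y.toReal hy0 ?_)
      simp [hy1', ENNReal.ofReal_toReal hy1.ne_top]
  have hq0 : 0 < q.toReal := ENNReal.toReal_pos hq hqt
  have h : EqOn (fun lam => (Iio 1).indicator ENNReal.ofReal lam ^ q.toReal / ENNReal.ofReal lam)
      ((Ioo 0 1).indicator fun lam => ENNReal.ofReal lam ^ (q.toReal - 1)) (Ioi 0) := by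
    intro lam hlam
    have hlam0 : ENNReal.ofReal lam ≠ 0 := ENNReal.ofReal_ne_zero_iff.2 hlam
    by_cases h1 : lam < 1
    · simp [h1, hlam.out, ENNReal.rpow_sub _ _ hlam0 ENNReal.ofReal_ne_top]
    · simp [hq0, h1]
  rw [of_ne_top hqt, setLIntegral_congr_fun measurableSet_Ioi h,
    lintegral_indicator measurableSet_Ioo, Measure.restrict_restrict measurableSet_Ioo,
    inter_eq_left.2 Ioo_subset_Ioi_self, Measure.restrict_congr_set Ioo_ae_eq_Ioc,
    lintegral_Ioc_ofReal_rpow_sub_one one_pos hq0, Real.one_rpow, one_div,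
    ENNReal.ofReal_inv_of_pos hq0, ENNReal.ofReal_toReal hqt,
    ENNReal.mul_inv_cancel hq hqt, ENNReal.one_rpow]

lemma top_le_of_antitone (hq : q ≠ 0) {h : ℝ → ℝ≥0∞} (hh : Antitone h) :
    haarLqNorm ∞ (fun lam => ENNReal.ofReal lam * h lam)
      ≤ haarLqNorm q (fun lam => ENNReal.ofReal lam * h lam) := by
  by_cases hqt : q = ∞
  · rw [hqt]
  have hq0 : 0 < q.toReal := ENNReal.toReal_pos hq hqt
  rw [top, of_ne_top hqt]
  refine iSup₂_le fun lam₀ (hlam₀ : 0 < lam₀) => ?_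
  rw [one_div, ENNReal.le_rpow_inv_iff hq0]
  calc (ENNReal.ofReal lam₀ * h lam₀) ^ q.toReal
      = q * ∫⁻ lam in Ioc 0 lam₀, ENNReal.ofReal lam ^ (q.toReal - 1) * h lam₀ ^ q.toReal := by
        rw [lintegral_mul_const _ (by fun_prop), lintegral_Ioc_ofReal_rpow_sub_one hlam₀ hq0,
          ← mul_assoc, ENNReal.mul_rpow_of_nonneg _ _ hq0.le, ENNReal.ofReal_div_of_pos hq0,
          ENNReal.ofReal_toReal hqt, ENNReal.mul_div_cancel hq hqt,
          ENNReal.ofReal_rpow_of_pos hlam₀]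
    _ ≤ q * ∫⁻ lam in Ioc 0 lam₀,
          (ENNReal.ofReal lam * h lam) ^ q.toReal / ENNReal.ofReal lam := by
        refine mul_le_mul_right (setLIntegral_mono' measurableSet_Ioc fun lam hlam => ?_) _
        have hlam0 : ENNReal.ofReal lam ≠ 0 := ENNReal.ofReal_ne_zero_iff.2 hlam.1
        rw [ENNReal.mul_rpow_of_nonneg _ _ hq0.le,
          ENNReal.rpow_sub _ _ hlam0 ENNReal.ofReal_ne_top, ENNReal.rpow_one]
        simp only [div_eq_mul_inv]
        rw [mul_right_comm]
        gcongr
        exact hh hlam.2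
    _ ≤ _ := by gcongr; exact Ioc_subset_Ioi_self

lemma le_mul_of_le (hq : q ≠ 0) (hqs : q ≤ s) (hs : s ≠ ∞)
    (hg : ∀ lam ∈ Ioi (0 : ℝ), g lam ≤ haarLqNorm q g) :
    haarLqNorm s g ≤ (s / q) ^ (1 / s.toReal) * haarLqNorm q g := by
  have hqt : q ≠ ∞ := ne_top_of_le_ne_top hs hqs
  have hs0' : s ≠ 0 := ((pos_iff_ne_zero.2 hq).trans_le hqs).ne'
  have hq0 : 0 < q.toReal := ENNReal.toReal_pos hq hqt
  have hs0 : 0 < s.toReal := ENNReal.toReal_pos hs0' hs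
  have hqs' : q.toReal ≤ s.toReal := ENNReal.toReal_mono hs hqs
  set N := haarLqNorm q g with hN
  by_cases hNt : N = ∞
  · have hC : (s / q) ^ (1 / s.toReal) ≠ 0 :=
      (ENNReal.rpow_pos (ENNReal.div_pos hs0' hqt) (ENNReal.div_ne_top hs hq)).ne'
    rw [hNt, ENNReal.mul_top hC]
    exact le_top
  have hqN :
      q * ∫⁻ lam in Ioi (0 : ℝ), g lam ^ q.toReal / ENNReal.ofReal lam = N ^ q.toReal := by
    rw [hN, of_ne_top hqt, ← ENNReal.rpow_mul, one_div_mul_cancel hq0.ne', ENNReal.rpow_one]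
  rw [of_ne_top hs, one_div, ENNReal.rpow_inv_le_iff hs0]
  calc s * ∫⁻ lam in Ioi (0 : ℝ), g lam ^ s.toReal / ENNReal.ofReal lam
      ≤ s * ∫⁻ lam in Ioi (0 : ℝ),
          g lam ^ q.toReal / ENNReal.ofReal lam * N ^ (s.toReal - q.toReal) := by
        refine mul_le_mul_right (setLIntegral_mono' measurableSet_Ioi fun lam hlam => ?_) _
        have hsplit : g lam ^ s.toReal = g lam ^ q.toReal * g lam ^ (s.toReal - q.toReal) := by
          rw [← ENNReal.rpow_add_of_nonneg _ _ hq0.le (sub_nonneg.2 hqs'), add_sub_cancel]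
        simp only [hsplit, div_eq_mul_inv]
        rw [mul_right_comm]
        gcongr
        exact hg lam hlam
    _ = s / q * (q * ∫⁻ lam in Ioi (0 : ℝ), g lam ^ q.toReal / ENNReal.ofReal lam)
          * N ^ (s.toReal - q.toReal) := by
        rw [lintegral_mul_const' _ _ (ENNReal.rpow_ne_top_of_nonneg (sub_nonneg.2 hqs') hNt),
          ← mul_assoc (s / q), ENNReal.div_mul_cancel hq hqt, mul_assoc]
    _ = ((s / q) ^ s.toReal⁻¹ * N) ^ s.toReal := by
        rw [hqN, mul_assoc, ← ENNReal.rpow_add_of_nonneg _ _ hq0.le (sub_nonneg.2 hqs'),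
          add_sub_cancel, ENNReal.mul_rpow_of_nonneg _ _ hs0.le, ← ENNReal.rpow_mul,
          inv_mul_cancel₀ hs0.ne', ENNReal.rpow_one]

end haarLqNorm

section Lorentz

variable {X Y : Type*} [MeasurableSpace X] [MeasurableSpace Y] (μ : Measure X) (ν : Measure Y)
  {p r : ℝ} {q s : ℝ≥0∞}

lemma lorentzNorm_eq_haarLqNorm (p : ℝ) (q : ℝ≥0∞) (f : X → ℂ) : lorentzNorm μ p q f
    = haarLqNorm q (fun lam => ENNReal.ofReal lam * distribFn μ f lam ^ (1 / p)) := rfl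

lemma distribFn_antitone (f : X → ℂ) : Antitone (distribFn μ f) :=
  fun _ _ hab => measure_mono fun _ hx => lt_of_le_of_lt hab hx

lemma measurable_ofReal_mul_distribFn_rpow (p : ℝ) (f : X → ℂ) :
    Measurable fun lam => ENNReal.ofReal lam * distribFn μ f lam ^ (1 / p) :=
  ENNReal.measurable_ofReal.mul ((distribFn_antitone μ f).measurable.pow_const _)

lemma lorentzNorm_indicator_one (hp : 0 < p) (hq : q ≠ 0) (B : Set X) :
    lorentzNorm μ p q (B.indicator 1) = μ B ^ (1 / p) := by
  have h : EqOn (fun lam => ENNReal.ofReal lam * distribFn μ (B.indicator 1) lam ^ (1 / p))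
      (fun lam => μ B ^ (1 / p) * (Iio 1).indicator ENNReal.ofReal lam) (Ioi 0) := by
    intro lam (hlam : 0 < lam)
    by_cases h1 : lam < 1
    · have hB : {x | lam < ‖B.indicator (1 : X → ℂ) x‖} = B := by
        ext x; by_cases hx : x ∈ B <;> simp [hx, h1, hlam.le]
      simp [distribFn, hB, h1, mul_comm]
    · have hB : {x | lam < ‖B.indicator (1 : X → ℂ) x‖} = ∅ := by
        ext x; by_cases hx : x ∈ B <;> simp [hx, h1, hlam.le]
      simp [distribFn, hB, h1, hp]
  rw [lorentzNorm_eq_haarLqNorm, haarLqNorm.congr h,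
    haarLqNorm.const_mul hq (ENNReal.measurable_ofReal.indicator measurableSet_Iio),
    haarLqNorm.indicator_Iio_one hq, mul_one]

lemma memLorentz_indicator_one (hp : 0 < p) (hq : q ≠ 0) {B : Set X} (hB : MeasurableSet B)
    (hμB : μ B ≠ ∞) : MemLorentz μ p q (B.indicator 1) :=
  ⟨measurable_one.indicator hB, by
    rw [lorentzNorm_indicator_one μ hp hq]
    exact ENNReal.rpow_lt_top_of_nonneg (by positivity) hμB⟩

lemma mul_lorentzNorm_le_of_distribFn (hq : q ≠ 0) {f : X → ℂ} {g : Y → ℂ} {k : ℝ≥0∞}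
    (h : ∀ lam : ℝ, 0 < lam → k * distribFn μ f lam ^ (1 / p) ≤ distribFn ν g lam ^ (1 / r)) :
    k * lorentzNorm μ p q f ≤ lorentzNorm ν r q g := by
  rw [lorentzNorm_eq_haarLqNorm, lorentzNorm_eq_haarLqNorm,
    ← haarLqNorm.const_mul hq (measurable_ofReal_mul_distribFn_rpow μ p f)]
  refine haarLqNorm.mono fun lam hlam => ?_
  rw [mul_left_comm]
  gcongr
  exact h lam hlam

lemma exists_lorentzNorm_le_const_mul (hp : 0 < p) (hq : q ≠ 0) (hqs : q ≤ s) :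
    ∃ C : ℝ≥0, 0 < C ∧ ∀ f : X → ℂ, lorentzNorm μ p s f ≤ C * lorentzNorm μ p q f := by
  have htop (f : X → ℂ) : lorentzNorm μ p ∞ f ≤ lorentzNorm μ p q f :=
    haarLqNorm.top_le_of_antitone hq fun _ _ hab =>
      ENNReal.rpow_le_rpow (distribFn_antitone μ f hab) (by positivity)
  by_cases hs : s = ∞
  · exact ⟨1, one_pos, fun f => by simpa [hs] using htop f⟩
  have hqt : q ≠ ∞ := ne_top_of_le_ne_top hs hqs
  have hs0 : s ≠ 0 := ((pos_iff_ne_zero.2 hq).trans_le hqs).ne'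
  have hC0 : (s / q) ^ (1 / s.toReal) ≠ 0 :=
    (ENNReal.rpow_pos (ENNReal.div_pos hs0 hqt) (ENNReal.div_ne_top hs hq)).ne'
  have hCt : (s / q) ^ (1 / s.toReal) ≠ ∞ :=
    ENNReal.rpow_ne_top_of_nonneg (by positivity) (ENNReal.div_ne_top hs hq)
  refine ⟨((s / q) ^ (1 / s.toReal)).toNNReal, ENNReal.toNNReal_pos hC0 hCt, fun f => ?_⟩
  rw [ENNReal.coe_toNNReal hCt]
  exact haarLqNorm.le_mul_of_le hq hqs hs fun lam hlam =>
    (haarLqNorm.apply_le_top hlam).trans (htop f)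

end Lorentz

lemma distribFn_comp_eq_setLIntegral {X Y : Type*} [MeasurableSpace X] [MeasurableSpace Y]
    {μ : Measure X} {ν : Measure Y} {φ : X → Y} {J : Y → ℝ≥0∞}
    (hJ : ∀ E : Set Y, MeasurableSet E → μ (φ ⁻¹' E) = ∫⁻ y in E, J y ∂ν) {f : Y → ℂ}
    (hf : Measurable f) (lam : ℝ) :
    distribFn μ (f ∘ φ) lam = ∫⁻ y in {y | lam < ‖f y‖}, J y ∂ν :=
  hJ _ (measurableSet_lt measurable_const hf.norm)

theorem boundedBelowCompositionOperator_iff_general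
    {X Y : Type*} [MeasurableSpace X] [MeasurableSpace Y]
    (μ : Measure X) (ν : Measure Y) [SigmaFinite ν]
    (φ : X → Y)
    (p r : ℝ) (hp : 1 < p) (hr : 1 < r)
    (s q : ℝ≥0∞) (hq : 1 ≤ q) (hqs : q ≤ s)
    (J : Y → ℝ≥0∞)
    (hJ : ∀ E : Set Y, MeasurableSet E → μ (φ ⁻¹' E) = ∫⁻ y in E, J y ∂ν) :
    (∃ k : ℝ≥0, 0 < k ∧ ∀ f : Y → ℂ, MemLorentz ν r s f →
        (k : ℝ≥0∞) * lorentzNorm ν r s f ≤ lorentzNorm μ p q (f ∘ φ)) ↔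
      (∃ k : ℝ≥0, 0 < k ∧ ∀ B : Set Y, MeasurableSet B →
        (k : ℝ≥0∞) ^ p * (ν B) ^ (p / r) ≤ ∫⁻ y in B, J y ∂ν) := by
  have hp0 : 0 < p := by linarith
  have hr0 : 0 < r := by linarith
  have hq0 : q ≠ 0 := (zero_lt_one.trans_le hq).ne'
  have hs0 : s ≠ 0 := (zero_lt_one.trans_le (hq.trans hqs)).ne'
  constructor
  · rintro ⟨k, hk, hbdd⟩
    refine ⟨k, hk, fun B hB => mul_rpow_measure_le_of_forall_measure_ne_top
      (F := fun B => ∫⁻ y in B, J y ∂ν) (fun _ _ h => lintegral_mono_set h) _ (div_pos hp0 hr0)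
      (fun B hB hνB => ?_) hB⟩
    have hind := hbdd _ (memLorentz_indicator_one ν hr0 hs0 hB hνB)
    have hcomp : B.indicator (1 : Y → ℂ) ∘ φ = (φ ⁻¹' B).indicator 1 :=
      funext fun _ => (indicator_comp_right φ).symm
    rwa [hcomp, lorentzNorm_indicator_one ν hr0 hs0,
      lorentzNorm_indicator_one μ hp0 hq0, mul_rpow_one_div_le_rpow_one_div_iff hp0, hJ B hB]
      at hind
  · rintro ⟨k, hk, hset⟩
    obtain ⟨C, hC, hle⟩ := exists_lorentzNorm_le_const_mul ν hr0 hq0 hqs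
    refine ⟨k / C, div_pos hk hC, fun f hf => ?_⟩
    have hdist (lam : ℝ) (_ : 0 < lam) :
        (k : ℝ≥0∞) * distribFn ν f lam ^ (1 / r) ≤ distribFn μ (f ∘ φ) lam ^ (1 / p) := by
      rw [mul_rpow_one_div_le_rpow_one_div_iff hp0, distribFn_comp_eq_setLIntegral hJ hf.1]
      exact hset _ (measurableSet_lt measurable_const hf.1.norm)
    calc ((k / C : ℝ≥0) : ℝ≥0∞) * lorentzNorm ν r s f
        ≤ (k / C : ℝ≥0) * (C * lorentzNorm ν r q f) := by gcongr; exact hle f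
      _ = k * lorentzNorm ν r q f := by
        rw [← mul_assoc, ← ENNReal.coe_mul, div_mul_cancel₀ _ hC.ne']
      _ ≤ lorentzNorm μ p q (f ∘ φ) := mul_lorentzNorm_le_of_distribFn ν μ hq0 hdist

/-- For a mapping with the Luzin `N⁻¹`-property inducing a composition
operator `C_φ : L_{r,s}(Y) → L_{p,q}(X)` with `q ≤ s`, the operator is bounded below iff
`∫_B J_{φ⁻¹} dν ≥ k^p (ν B)^{p/r}` for all measurable `B` and some `k > 0`. -/
theorem boundedBelowCompositionOperator_iff
    {X Y : Type*} [MeasurableSpace X] [MeasurableSpace Y]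
    (μ : Measure X) (ν : Measure Y) [SigmaFinite μ] [SigmaFinite ν]
    (φ : X → Y) (hφ : Measurable φ)
    (hN : ∀ S : Set Y, MeasurableSet S → ν S = 0 → μ (φ ⁻¹' S) = 0)
    (p r : ℝ) (hp : 1 < p) (hr : 1 < r)
    (s q : ℝ≥0∞) (hq : 1 ≤ q) (hqs : q ≤ s)
    (J : Y → ℝ≥0∞) (hJmeas : Measurable J)
    (hJ : ∀ E : Set Y, MeasurableSet E → μ (φ ⁻¹' E) = ∫⁻ y in E, J y ∂ν)
    (hcomp : ∀ f : Y → ℂ, MemLorentz ν r s f → MemLorentz μ p q (f ∘ φ)) :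
    (∃ k : ℝ≥0, 0 < k ∧ ∀ f : Y → ℂ, MemLorentz ν r s f →
        (k : ℝ≥0∞) * lorentzNorm ν r s f ≤ lorentzNorm μ p q (f ∘ φ)) ↔
      (∃ k : ℝ≥0, 0 < k ∧ ∀ B : Set Y, MeasurableSet B →
        (k : ℝ≥0∞) ^ p * (ν B) ^ (p / r) ≤ ∫⁻ y in B, J y ∂ν) :=
  boundedBelowCompositionOperator_iff_general μ ν φ p r hp hr s q hq hqs J hJ
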